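/- arXiv:1401.7484 — 2 statements merged into one kernel-verified Lean document; each statement's English description precedes it below -/
import Mathlib

section
/- Let t, u ∈ ℂ with t ≠ 0, set x = t + t⁻¹, and define A = [[t,1],[0,t⁻¹]], B = [[t,0],[2−u,t⁻¹]], W = A⁻¹ B A B⁻¹. Then W·A − B·W = 0 if and only if (x² − 2)(1 − u) + 1 − u + u² = 0, provided u ≠ 2 (the irreducible case). -/
set_option maxHeartbeats 1000000

theorem figure_eight_relation (t u : ℂ) (ht : t ≠ 0) (hu : u ≠ 2) (x : ℂ) (hx : x = t + t⁻¹)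
    (A B W : Matrix (Fin 2) (Fin 2) ℂ)
    (hA : A = !![t, 1; 0, t⁻¹]) (hB : B = !![t, 0; 2 - u, t⁻¹])
    (hW : W = A⁻¹ * B * A * B⁻¹) :
    W * A - B * W = 0 ↔ (x ^ 2 - 2) * (1 - u) + 1 - u + u ^ 2 = 0 := by
  subst hx
  have hAi : A⁻¹ = !![t⁻¹, -1; 0, t] := by
    rw [hA]
    apply Matrix.inv_eq_right_inv
    ext i j
    fin_cases i <;> fin_cases j <;>
      simp [Matrix.mul_apply, Fin.sum_univ_two] <;> field_simp
  have hBi : B⁻¹ = !![t⁻¹, 0; u - 2, t] := by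
    rw [hB]
    apply Matrix.inv_eq_right_inv
    ext i j
    fin_cases i <;> fin_cases j <;>
      simp [Matrix.mul_apply, Fin.sum_univ_two] <;> field_simp <;> ring
  set P : ℂ := ((t + t⁻¹) ^ 2 - 2) * (1 - u) + 1 - u + u ^ 2 with hP
  have key : W * A - B * W = !![0, P; (u - 2) * P, 0] := by
    rw [hW, hAi, hBi, hA, hB]
    simp only [Matrix.mul_fin_two]
    ext i j
    fin_cases i <;> fin_cases j <;>
      simp only [Matrix.sub_apply, Matrix.of_apply, Matrix.cons_val', Matrix.cons_val_zero, Matrix.cons_val_one,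
        Matrix.head_cons, Matrix.head_fin_const, Matrix.empty_val', Matrix.cons_val_fin_one,
        Fin.mk_zero, Fin.mk_one, Fin.isValue, hP]
    · ring
    · linear_combination (-5 + 5*u - t⁻¹^2 + 3*t*t⁻¹ - t^2) * (mul_inv_cancel₀ ht)
    · linear_combination (10 - 15*u + 5*u^2 + 2*t⁻¹^2 - t⁻¹^2*u - 6*t*t⁻¹ + 3*t*t⁻¹*u
        + 2*t^2 - t^2*u) * (mul_inv_cancel₀ ht)
    · ring
  rw [key]
  constructor
  · intro h
    have h01 := congrFun (congrFun h 0) 1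
    simpa using h01
  · intro h
    rw [h]
    ext i j
    fin_cases i <;> fin_cases j <;> simp
end

section
/- Eliminating z₁, z₂ from the system z₁(1−z₁)z₂(1−z₂) = 1, z₁(1−z₁) = y, z₂(1−z₁) = x yields the relation H(x,y) = 0 where H(x,y) = y(x⁴ − x³ − 2x² − x + 1) + y²x² + x²; that is, any (z₁, z₂, x, y) with z₁, z₂ ∉ {0,1}, x, y ≠ 0 satisfying the three equations also satisfies H(x,y) = 0. -/
theorem holonomy_elimination (z₁ z₂ x y : ℂ)
    (hz₁0 : z₁ ≠ 0) (hz₁1 : z₁ ≠ 1) (hz₂0 : z₂ ≠ 0) (hz₂1 : z₂ ≠ 1)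
    (hx : x ≠ 0) (hy : y ≠ 0)
    (hglue : z₁ * (1 - z₁) * (z₂ * (1 - z₂)) = 1)
    (h1 : z₁ * (1 - z₁) = y) (h2 : z₂ * (1 - z₁) = x) :
    y * (x ^ 4 - x ^ 3 - 2 * x ^ 2 - x + 1) + y ^ 2 * x ^ 2 + x ^ 2 = 0 := by
  -- Step 1: eliminate z₂ using h1, h2.
  have hE : y * x * ((1 - z₁) - x) = (1 - z₁) ^ 2 := by
    rw [← h1, ← h2]
    linear_combination (1 - z₁) ^ 2 * hglue
  -- Step 2: resultant-style elimination of z₁ from hE and h1.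
  have key : y * (y * (x ^ 4 - x ^ 3 - 2 * x ^ 2 - x + 1) + y ^ 2 * x ^ 2 + x ^ 2) = 0 := by
    linear_combination ((((y * x - 1) * (1 - z₁) + y * (x ^ 2 - 1) - (y * x - 1))
        - (y * x - 1) ^ 2) * h1)
      - ((y * x - 1) * (1 - z₁) + y * (x ^ 2 - 1) - (y * x - 1)) * hE
  have := mul_left_cancel₀ hy (key.trans (mul_zero y).symm)
  simpa using this
end
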